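/- arXiv:2411.12512 — 5 statements merged into one kernel-verified Lean document; each statement's English description precedes it below -/
import Mathlib

section
/- Consider the lazy random walk on (ℤ/qℤ)^h starting at 0, where at each step an index i ∈ [h] and a value m ∈ ℤ/qℤ are drawn independently and uniformly at random, and m·e_i is added to the current position. If k ≥ 2h(log h + log(1/ψ)) for some ψ ∈ (0,1), then for every u ∈ (ℤ/qℤ)^h the probability that the walk is at u after k steps is at least (1-ψ)/q^h. -/
/-!
Condition on the sequence `ι ∈ [h]^k` of chosen coordinates. Once `ι` hits every coordinate,
the position is the image of the uniformly random values `m ∈ (ℤ/qℤ)^k` under a surjective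
homomorphism `(ℤ/qℤ)^k → (ℤ/qℤ)^h`, so each point is hit by exactly `q^(k-h)` value sequences.
By the union bound, `ι` misses some coordinate with probability at most
`h (1 - 1/h)^k ≤ h e^(-k/h) ≤ ψ`.
-/

/-- The position of the lazy random walk on `(ℤ/qℤ)^h` after `k` steps,
given the sequence of step choices `ω j = (i_j, m_j)`: at each step `m_j · e_{i_j}`
is added to the current position. -/
noncomputable def walkPos (q h k : ℕ) [NeZero q] (ω : Fin k → Fin h × ZMod q) :
    Fin h → ZMod q :=
  ∑ j, Pi.single (ω j).1 (ω j).2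

open Finset Function

theorem AddMonoidHom.card_eq_card_mul_card_fiber_of_surjective {G H : Type*} [AddGroup G]
    [Fintype G] [AddMonoid H] [Fintype H] [DecidableEq H] (f : G →+ H) (hf : Surjective f)
    (u : H) : Fintype.card G = Fintype.card H * #{g | f g = u} := by
  have hfibers : ∀ v, #{g | f g = v} = #{g | f g = u} := fun v =>
    AddMonoidHom.card_fiber_eq_of_mem_range f (hf v) (hf u)
  calc Fintype.card G = ∑ v : H, #{g | f g = v} :=
        card_eq_sum_card_fiberwise fun g _ => mem_univ (f g)
    _ = Fintype.card H * #{g | f g = u} := by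
        simp only [hfibers, sum_const, card_univ, smul_eq_mul]

section Pushforward

variable {κ η M : Type*} [Fintype κ] [DecidableEq η] [AddCommMonoid M]

def sumSingleHom (ι : κ → η) : (κ → M) →+ (η → M) where
  toFun m := ∑ j, Pi.single (ι j) (m j)
  map_zero' := by simp
  map_add' m m' := by simp [Pi.single_add, sum_add_distrib]

theorem sumSingleHom_apply (ι : κ → η) (m : κ → M) :
    sumSingleHom ι m = ∑ j, Pi.single (ι j) (m j) := rfl

theorem sumSingleHom_single [DecidableEq κ] (ι : κ → η) (j : κ) (c : M) :
    sumSingleHom ι (Pi.single j c) = Pi.single (ι j) c := by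
  rw [sumSingleHom_apply, sum_eq_single j (fun j' _ hj' => by simp [Pi.single_eq_of_ne hj'])
    (by simp)]
  simp

theorem sumSingleHom_surjective [Fintype η] {ι : κ → η} (hι : Surjective ι) :
    Surjective (sumSingleHom (M := M) ι) := by
  classical
  intro u
  refine ⟨∑ i, Pi.single (surjInv hι i) (u i), ?_⟩
  simp only [map_sum, sumSingleHom_single, surjInv_eq hι]
  exact LinearMap.sum_single_apply _ u

end Pushforward

section Surjections

variable {α β : Type*} [Fintype α] [DecidableEq α] [Fintype β] [DecidableEq β]

theorem card_filter_forall_ne (b : β) :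
    #{f : α → β | ∀ a, f a ≠ b} = (Fintype.card β - 1) ^ Fintype.card α := by
  have : ({f : α → β | ∀ a, f a ≠ b} : Finset _) = Fintype.piFinset fun _ => univ.erase b := by
    ext f; simp [Fintype.mem_piFinset]
  rw [this, Fintype.card_piFinset, prod_const, card_erase_of_mem (mem_univ b), card_univ,
    card_univ]

open scoped Classical in
theorem card_filter_not_surjective_le :
    #{f : α → β | ¬ Surjective f} ≤ Fintype.card β * (Fintype.card β - 1) ^ Fintype.card α :=
  calc #{f : α → β | ¬ Surjective f}
      ≤ #(univ.biUnion fun b => ({f : α → β | ∀ a, f a ≠ b} : Finset _)) := by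
        refine card_le_card fun f hf => ?_
        simpa [Surjective] using hf
    _ ≤ ∑ b : β, #{f : α → β | ∀ a, f a ≠ b} := card_biUnion_le
    _ = _ := by simp only [card_filter_forall_ne, sum_const, card_univ, smul_eq_mul]

end Surjections

theorem mul_sub_one_pow_le_of_log_le {x ψ : ℝ} {k : ℕ} (hx : 1 ≤ x) (hψ : 0 < ψ)
    (hk : x * Real.log (x / ψ) ≤ k) : x * (x - 1) ^ k ≤ ψ * x ^ k := by
  have hx0 : 0 < x := by linarith
  have hdecay : (1 - x⁻¹) ^ k ≤ ψ / x :=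
    calc (1 - x⁻¹) ^ k ≤ Real.exp (-x⁻¹) ^ k :=
          pow_le_pow_left₀ (sub_nonneg.2 (inv_le_one_of_one_le₀ hx))
            (by linarith [Real.add_one_le_exp (-x⁻¹)]) k
      _ = Real.exp (-(k / x)) := by rw [← Real.exp_nat_mul]; ring_nf
      _ ≤ Real.exp (-Real.log (x / ψ)) := by
          gcongr
          rwa [le_div_iff₀ hx0, mul_comm]
      _ = ψ / x := by rw [Real.exp_neg, Real.exp_log (by positivity), inv_div]
  calc x * (x - 1) ^ k = x * x ^ k * (1 - x⁻¹) ^ k := by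
        rw [mul_assoc, ← mul_pow, mul_sub, mul_inv_cancel₀ hx0.ne', mul_one]
    _ ≤ x * x ^ k * (ψ / x) := by gcongr
    _ = ψ * x ^ k := by field_simp

open scoped Classical in
theorem one_sub_mul_card_pow_le_card_surjective {α β : Type*} [Fintype α] [DecidableEq α]
    [Fintype β] [DecidableEq β] [Nonempty β] {ψ : ℝ} (hψ : 0 < ψ)
    (hk : Fintype.card β * Real.log (Fintype.card β / ψ) ≤ Fintype.card α) :
    (1 - ψ) * (Fintype.card β : ℝ) ^ Fintype.card α ≤ #{f : α → β | Surjective f} := by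
  have hsplit : #{f : α → β | Surjective f} + #{f : α → β | ¬ Surjective f} =
      Fintype.card β ^ Fintype.card α := by
    rw [card_filter_add_card_filter_not, card_univ, Fintype.card_fun]
  have hnot : (#{f : α → β | ¬ Surjective f} : ℝ) ≤
      Fintype.card β * (Fintype.card β - 1) ^ Fintype.card α := by
    have := card_filter_not_surjective_le (α := α) (β := β)
    rw [← Nat.cast_pred Fintype.card_pos]
    exact_mod_cast this
  have hdecay := mul_sub_one_pow_le_of_log_le (by exact_mod_cast Fintype.card_pos) hψ hk
  have hsplit' : (#{f : α → β | Surjective f} : ℝ) + #{f : α → β | ¬ Surjective f} =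
      (Fintype.card β : ℝ) ^ Fintype.card α := by exact_mod_cast hsplit
  linarith

theorem card_walkPos_eq_sum (q h k : ℕ) [NeZero q] (u : Fin h → ZMod q) :
    #{ω | walkPos q h k ω = u} = ∑ ι : Fin k → Fin h, #{m | sumSingleHom ι m = u} := by
  simp only [card_filter]
  rw [← Fintype.sum_prod_type']
  -- `walkPos q h k ω` is definitionally `sumSingleHom (Prod.fst ∘ ω) (Prod.snd ∘ ω)`.
  exact Fintype.sum_equiv (Equiv.arrowProdEquivProdArrow _ _ _) _ _ fun ω => rfl

open scoped Classical in
theorem pow_mul_card_surjective_le (q h k : ℕ) [NeZero q] (u : Fin h → ZMod q) :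
    q ^ k * #{ι : Fin k → Fin h | Surjective ι} ≤ q ^ h * #{ω | walkPos q h k ω = u} := by
  have hfiber : ∀ ι : Fin k → Fin h, Surjective ι → q ^ k = q ^ h * #{m | sumSingleHom ι m = u} :=
    fun ι hι => by
      simpa using (sumSingleHom ι).card_eq_card_mul_card_fiber_of_surjective
        (sumSingleHom_surjective (M := ZMod q) hι) u
  calc q ^ k * #{ι : Fin k → Fin h | Surjective ι}
      = ∑ ι with Surjective ι, q ^ h * #{m | sumSingleHom ι m = u} := by
        rw [mul_comm, ← smul_eq_mul, ← sum_const]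
        exact sum_congr rfl fun ι hι => hfiber ι (mem_filter.1 hι).2
    _ ≤ ∑ ι, q ^ h * #{m | sumSingleHom ι m = u} := sum_le_sum_of_subset (subset_univ _)
    _ = q ^ h * #{ω | walkPos q h k ω = u} := by rw [← mul_sum, card_walkPos_eq_sum]

theorem lazy_walk_lower_bound_general (q h k : ℕ) [NeZero q] (hh : 2 ≤ h)
    (ψ : ℝ) (hψ : ψ ∈ Set.Ioo (0 : ℝ) 1)
    (hk : (k : ℝ) ≥ 2 * h * (Real.log h + Real.log (1 / ψ)))
    (u : Fin h → ZMod q) :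
    (1 - ψ) / (q : ℝ) ^ h ≤
      ((Finset.univ.filter (fun ω : Fin k → Fin h × ZMod q => walkPos q h k ω = u)).card : ℝ)
        / ((h * q : ℕ) : ℝ) ^ k := by
  classical
  obtain ⟨hψ0, hψ1⟩ := hψ
  have : Nonempty (Fin h) := ⟨⟨0, by omega⟩⟩
  have hlog : (h : ℝ) * Real.log (h / ψ) ≤ k := by
    have hh1 : (1 : ℝ) ≤ h := by exact_mod_cast (by omega : 1 ≤ h)
    have hnonneg : 0 ≤ Real.log (h / ψ) := Real.log_nonneg (by rw [le_div_iff₀ hψ0]; linarith)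
    have hsplit : Real.log (h / ψ) = Real.log h + Real.log (1 / ψ) := by
      rw [← Real.log_mul (by positivity) (by positivity), mul_one_div]
    rw [hsplit] at hnonneg ⊢
    nlinarith
  have hsurj := one_sub_mul_card_pow_le_card_surjective (α := Fin k) (β := Fin h) hψ0
    (by simpa using hlog)
  have hcount : (q : ℝ) ^ k * #{ι : Fin k → Fin h | Surjective ι} ≤
      (q : ℝ) ^ h * #{ω | walkPos q h k ω = u} := by
    exact_mod_cast pow_mul_card_surjective_le q h k u
  simp only [Fintype.card_fin] at hsurj
  have hq0 : (0 : ℝ) < q := Nat.cast_pos.2 (NeZero.pos q)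
  have hh0 : (0 : ℝ) < h := Nat.cast_pos.2 (by omega)
  rw [Nat.cast_mul, mul_pow, div_le_div_iff₀ (by positivity) (by positivity)]
  calc (1 - ψ) * ((h : ℝ) ^ k * q ^ k) = q ^ k * ((1 - ψ) * h ^ k) := by ring
    _ ≤ q ^ k * #{ι : Fin k → Fin h | Surjective ι} := by gcongr
    _ ≤ q ^ h * #{ω | walkPos q h k ω = u} := hcount
    _ = _ := mul_comm _ _

/-- Lower bound on the point probabilities of the lazy random walk on `(ℤ/qℤ)^h`:
if `k ≥ 2h(log h + log(1/ψ))`, then for every `u` the probability (uniform over all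
`(h·q)^k` step sequences) that the walk is at `u` after `k` steps is at least
`(1-ψ)/q^h`. -/
theorem lazy_walk_lower_bound (q h k : ℕ) [NeZero q] (hq : 2 ≤ q) (hh : 2 ≤ h)
    (ψ : ℝ) (hψ : ψ ∈ Set.Ioo (0 : ℝ) 1)
    (hk : (k : ℝ) ≥ 2 * h * (Real.log h + Real.log (1 / ψ)))
    (u : Fin h → ZMod q) :
    (1 - ψ) / (q : ℝ) ^ h ≤
      ((Finset.univ.filter (fun ω : Fin k → Fin h × ZMod q => walkPos q h k ω = u)).card : ℝ)
        / ((h * q : ℕ) : ℝ) ^ k :=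
  lazy_walk_lower_bound_general q h k hh ψ hψ hk u
end

section
/- Consider the lazy random walk on (ℤ/qℤ)^h starting at 0, where at each step an index i ∈ [h] and a value m ∈ ℤ/qℤ are drawn independently and uniformly at random, and m·e_i is added to the current position. If k ≥ 4h(log h + log q + log(1/ψ)) for some ψ ∈ (0,1), then for every u ∈ (ℤ/qℤ)^h the probability that the walk is at u after k steps is at most (1+ψ)/q^h. -/
open Finset

theorem eq_of_sum_eq_of_eqOn_erase {α β : Type*} [DecidableEq α] [AddCancelCommMonoid β]
    {s : Finset α} {f g : α → β} {a : α} (ha : a ∈ s) (hsum : ∑ x ∈ s, f x = ∑ x ∈ s, g x)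
    (hfg : ∀ x ∈ s.erase a, f x = g x) : f a = g a := by
  rw [← add_sum_erase s f ha, ← add_sum_erase s g ha, sum_congr rfl hfg] at hsum
  exact add_right_cancel hsum

theorem sum_single_apply {α β γ : Type*} [Fintype α] [AddCommMonoid β] [DecidableEq γ]
    (ι : α → γ) (m : α → β) (i : γ) :
    (∑ j, Pi.single (ι j) (m j) : γ → β) i = ∑ j with ι j = i, m j := by
  simp [Finset.sum_apply, Pi.single_apply, Finset.sum_filter, @eq_comm _ i]

theorem card_filter_mul_pow_le_of_eqOn_compl {α β : Type*} [Fintype α] [DecidableEq α]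
    [Fintype β] (P : (α → β) → Prop) [DecidablePred P] (R : Finset α)
    (hP : ∀ f, P f → ∀ g, P g → (∀ j ∉ R, f j = g j) → f = g) :
    #{f | P f} * Fintype.card β ^ #R ≤ Fintype.card β ^ Fintype.card α := by
  have hinj : #{f | P f} ≤ #(univ : Finset ((Rᶜ : Finset α) → β)) :=
    card_le_card_of_injOn (fun f j => f j) (fun _ _ => mem_univ _) fun f hf g hg hfg =>
      hP f (mem_filter.1 hf).2 g (mem_filter.1 hg).2 fun j hj =>
        congrFun hfg ⟨j, mem_compl.2 hj⟩
  rw [card_univ, Fintype.card_fun, Fintype.card_coe] at hinj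
  calc #{f | P f} * Fintype.card β ^ #R
      ≤ Fintype.card β ^ #Rᶜ * Fintype.card β ^ #R := Nat.mul_le_mul_right _ hinj
    _ = Fintype.card β ^ Fintype.card α := by rw [← pow_add, card_compl_add_card]

theorem card_filter_arrow_prod {α β γ : Type*} [Fintype α] [DecidableEq α] [Fintype β]
    [Fintype γ] (P : (α → γ × β) → Prop) [DecidablePred P] :
    #{ω | P ω} = ∑ ι : α → γ, #{m : α → β | P fun j => (ι j, m j)} := by
  simp only [card_filter]
  rw [← (Equiv.arrowProdEquivProdArrow α (fun _ => γ) (fun _ => β)).symm.sum_comp,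
    Fintype.sum_prod_type]
  rfl

theorem card_sum_single_eq_mul_pow_le {α β γ : Type*} [Fintype α] [DecidableEq α] [Fintype β]
    [DecidableEq β] [AddCancelCommMonoid β] [Fintype γ] [DecidableEq γ]
    (ι : α → γ) (u : γ → β) :
    #{m : α → β | ∑ j, Pi.single (ι j) (m j) = u} * Fintype.card β ^ #(univ.image ι)
      ≤ Fintype.card β ^ Fintype.card α := by
  -- `R` picks one step in each nonempty fibre of `ι`
  obtain ⟨R, -, hinj, hR⟩ := exists_subset_injOn_image_eq_of_surjOn Set.univ (univ.image ι)
    fun i hi => by simpa using hi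
  rw [← hR, card_image_of_injOn hinj]
  refine card_filter_mul_pow_le_of_eqOn_compl _ R fun m hm m' hm' hoff => funext fun j => ?_
  by_cases hj : j ∈ R
  · have hfib := congrFun (hm.trans hm'.symm) (ι j)
    rw [sum_single_apply, sum_single_apply] at hfib
    refine eq_of_sum_eq_of_eqOn_erase (by simp) hfib fun x hx => hoff x fun hxR => ?_
    obtain ⟨hxj, hx⟩ := mem_erase.1 hx
    exact hxj (hinj hxR hj (mem_filter.1 hx).2)
  · exact hoff j hj

theorem card_walkPos_eq_mul_pow_le (q h k : ℕ) [NeZero q] (u : Fin h → ZMod q) :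
    #{ω | walkPos q h k ω = u} * q ^ h ≤ q ^ k * ∑ ι : Fin k → Fin h, q ^ #(univ.image ι)ᶜ := by
  have hwalk (ι : Fin k → Fin h) (m : Fin k → ZMod q) :
      walkPos q h k (fun j => (ι j, m j)) = ∑ j, Pi.single (ι j) (m j) := rfl
  simp only [card_filter_arrow_prod, hwalk, sum_mul, mul_sum]
  refine sum_le_sum fun ι _ => ?_
  have hfibre := card_sum_single_eq_mul_pow_le ι u
  rw [ZMod.card, Fintype.card_fin] at hfibre
  calc #{m : Fin k → ZMod q | ∑ j, Pi.single (ι j) (m j) = u} * q ^ h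
      = #{m : Fin k → ZMod q | ∑ j, Pi.single (ι j) (m j) = u} * q ^ #(univ.image ι)
          * q ^ #(univ.image ι)ᶜ := by
        rw [mul_assoc, ← pow_add, card_add_card_compl, Fintype.card_fin]
    _ ≤ q ^ k * q ^ #(univ.image ι)ᶜ := Nat.mul_le_mul_right _ hfibre

theorem sum_add_one_pow_card_compl_image {α γ R : Type*} [Fintype α] [DecidableEq α]
    [Fintype γ] [DecidableEq γ] [CommSemiring R] (c : R) :
    ∑ ι : α → γ, (c + 1) ^ #(univ.image ι)ᶜ
      = ∑ T : Finset γ, c ^ #T * (#Tᶜ : R) ^ Fintype.card α := by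
  have hsubsets (S : Finset γ) : (c + 1) ^ #S = ∑ T ∈ S.powerset, c ^ #T := by
    simpa using (sum_pow_mul_eq_add_pow c 1 S).symm
  have havoiding (T : Finset γ) :
      #{ι : α → γ | T ⊆ (univ.image ι)ᶜ} = #Tᶜ ^ Fintype.card α := by
    have hpi : ({ι : α → γ | T ⊆ (univ.image ι)ᶜ} : Finset (α → γ))
        = Fintype.piFinset fun _ => Tᶜ := by
      ext ι
      rw [mem_filter, subset_compl_comm, image_subset_iff, Fintype.mem_piFinset]
      simp
    rw [hpi, Fintype.card_piFinset, prod_const, card_univ]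
  simp_rw [hsubsets]
  rw [sum_comm' (t' := univ) (s' := fun T => {ι : α → γ | T ⊆ (univ.image ι)ᶜ})
    (fun ι T => by simp)]
  refine sum_congr rfl fun T _ => ?_
  rw [sum_const, havoiding, nsmul_eq_mul, mul_comm, Nat.cast_pow]

open Real

theorem sub_le_mul_exp_neg_div {n t : ℝ} (hn : 0 ≤ n) (ht : 0 ≤ t) :
    n - t ≤ n * exp (-(t / n)) := by
  rcases hn.eq_or_lt with rfl | hn
  · simpa using ht
  calc n - t = n * (1 - t / n) := by field_simp
    _ ≤ n * exp (-(t / n)) := mul_le_mul_of_nonneg_left (one_sub_le_exp_neg _) hn.le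

theorem sum_pow_mul_card_compl_pow_le {γ : Type*} [Fintype γ] [DecidableEq γ] {c : ℝ}
    (hc : 0 ≤ c) (k : ℕ) :
    ∑ T : Finset γ, c ^ #T * (#Tᶜ : ℝ) ^ k
      ≤ (Fintype.card γ : ℝ) ^ k
          * (1 + c * exp (-(k / Fintype.card γ))) ^ Fintype.card γ := by
  set n : ℝ := (Fintype.card γ : ℝ)
  have hterm (T : Finset γ) :
      c ^ #T * (#Tᶜ : ℝ) ^ k ≤ n ^ k * (c * exp (-(k / n))) ^ #T := by
    have hcompl : (#Tᶜ : ℝ) ≤ n * exp (-(#T / n)) := by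
      rw [card_compl, Nat.cast_sub (card_le_univ T)]
      exact sub_le_mul_exp_neg_div (Nat.cast_nonneg _) (Nat.cast_nonneg _)
    calc c ^ #T * (#Tᶜ : ℝ) ^ k ≤ c ^ #T * (n * exp (-(#T / n))) ^ k := by gcongr
      _ = n ^ k * (c * exp (-(k / n))) ^ #T := by
        rw [mul_pow, mul_pow, ← exp_nat_mul, ← exp_nat_mul]
        ring_nf
  have hbinomial (x : ℝ) : ∑ T : Finset γ, x ^ #T = (1 + x) ^ Fintype.card γ := by
    simpa [add_comm] using Fintype.sum_pow_mul_eq_add_pow γ x 1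
  calc ∑ T : Finset γ, c ^ #T * (#Tᶜ : ℝ) ^ k
      ≤ ∑ T : Finset γ, n ^ k * (c * exp (-(k / n))) ^ #T := sum_le_sum fun T _ => hterm T
    _ = n ^ k * (1 + c * exp (-(k / n))) ^ Fintype.card γ := by rw [← mul_sum, hbinomial]

theorem one_add_pow_le_one_add_two_mul {y : ℝ} (n : ℕ) (hy : 0 ≤ y) (hny : n * y ≤ 1) :
    (1 + y) ^ n ≤ 1 + 2 * (n * y) := by
  have hexp : exp (n * y) ≤ 1 + n * y + (n * y) ^ 2 := by
    have := abs_exp_sub_one_sub_id_le (x := n * y) (by rw [abs_le]; constructor <;> nlinarith)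
    linarith [(abs_le.1 this).2]
  calc (1 + y) ^ n ≤ exp y ^ n := by
        gcongr
        linarith [add_one_le_exp y]
    _ = exp (n * y) := (exp_nat_mul y n).symm
    _ ≤ 1 + 2 * (n * y) := by nlinarith [mul_nonneg n.cast_nonneg hy]

theorem mul_mul_exp_neg_div_le {h q ψ k : ℝ} (hh : 0 < h) (hq : 0 < q) (hψ : 0 < ψ)
    (hψhq : 2 * ψ ≤ h * q) (hk : k ≥ 4 * h * (log h + log q + log (1 / ψ))) :
    h * q * exp (-(k / h)) ≤ ψ / 2 := by
  set L := log h + log q + log (1 / ψ)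
  have hexpL : exp L = h * q / ψ := by
    rw [exp_add, exp_add, exp_log hh, exp_log hq, exp_log (by positivity)]
    field_simp
  have hlog2L : log 2 ≤ L := by
    rw [← exp_le_exp, exp_log two_pos, hexpL, le_div_iff₀ hψ]
    exact hψhq
  have hkL : L + log 2 ≤ k / h := by
    rw [le_div_iff₀ hh]
    nlinarith [log_nonneg one_le_two]
  calc h * q * exp (-(k / h)) ≤ h * q * exp (-(L + log 2)) := by gcongr
    _ = ψ / 2 := by
      rw [exp_neg, exp_add, hexpL, exp_log two_pos]
      field_simp

/-- Upper bound on the point probabilities of the lazy random walk on `(ℤ/qℤ)^h`: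
if `k ≥ 4h(log h + log q + log(1/ψ))`, then for every `u` the probability (uniform over all
`(h·q)^k` step sequences) that the walk is at `u` after `k` steps is at most
`(1+ψ)/q^h`. -/
theorem lazy_walk_upper_bound (q h k : ℕ) [NeZero q] (hq : 2 ≤ q) (hh : 2 ≤ h)
    (ψ : ℝ) (hψ : ψ ∈ Set.Ioo (0 : ℝ) 1)
    (hk : (k : ℝ) ≥ 4 * h * (Real.log h + Real.log q + Real.log (1 / ψ)))
    (u : Fin h → ZMod q) :
    ((Finset.univ.filter (fun ω : Fin k → Fin h × ZMod q => walkPos q h k ω = u)).card : ℝ)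
        / ((h * q : ℕ) : ℝ) ^ k ≤ (1 + ψ) / (q : ℝ) ^ h := by
  obtain ⟨hψ0, hψ1⟩ := hψ
  have hq' : (2 : ℝ) ≤ q := by exact_mod_cast hq
  have hh' : (2 : ℝ) ≤ h := by exact_mod_cast hh
  set y := ((q : ℝ) - 1) * exp (-(k / h))
  have hy : 0 ≤ y := mul_nonneg (by linarith) (exp_pos _).le
  have hhy : h * y ≤ ψ / 2 := by
    calc h * y ≤ h * q * exp (-(k / h)) := by simp only [y, mul_assoc]; gcongr; linarith
      _ ≤ ψ / 2 :=
        mul_mul_exp_neg_div_le (by positivity) (by positivity) hψ0 (by nlinarith) hk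
  have hcount := card_walkPos_eq_mul_pow_le q h k u
  have hsubsets := sum_add_one_pow_card_compl_image (α := Fin k) (γ := Fin h) ((q : ℝ) - 1)
  simp only [sub_add_cancel, Fintype.card_fin] at hsubsets
  have hbound := sum_pow_mul_card_compl_pow_le (γ := Fin h) (c := (q : ℝ) - 1) (by linarith) k
  rw [Fintype.card_fin] at hbound
  rw [div_le_div_iff₀ (by positivity) (by positivity)]
  calc (#{ω | walkPos q h k ω = u} : ℝ) * q ^ h
      ≤ q ^ k * ∑ ι : Fin k → Fin h, (q : ℝ) ^ #(univ.image ι)ᶜ := by exact_mod_cast hcount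
    _ ≤ q ^ k * (h ^ k * (1 + y) ^ h) := by rw [hsubsets]; gcongr
    _ ≤ q ^ k * (h ^ k * (1 + ψ)) := by
        gcongr
        linarith [one_add_pow_le_one_add_two_mul h hy (by linarith)]
    _ = (1 + ψ) * ((h * q : ℕ) : ℝ) ^ k := by push_cast; ring
end

section
/- Fix positive integers h, q, k with q ≥ 2 and suppose k ≥ 4h(log h + log q). Then the function t ↦ C(h,t) · q^{-t} · (t/h)^k is nondecreasing on the integers {1, 2, …, h-1}, where C(h,t) is the binomial coefficient. -/
/-!
The ratio of consecutive terms is `(h - t) / ((t + 1) q) * (1 + 1/t)^k`. Since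
`log (1 + 1/t) ≥ 1/(t + 1) ≥ 1/h`, the factor `(1 + 1/t)^k` is at least
`exp (k / h) ≥ (h q)^4 ≥ h q ≥ (t + 1) q / (h - t)`, so the ratio is at least `1`.
-/

open Real

lemma Real.inv_add_one_le_log_add_one_div {x : ℝ} (hx : 0 < x) :
    (x + 1)⁻¹ ≤ log ((x + 1) / x) := by
  have h := one_sub_inv_le_log_of_pos (show 0 < (x + 1) / x by positivity)
  calc (x + 1)⁻¹ = 1 - ((x + 1) / x)⁻¹ := by field_simp; ring
    _ ≤ log ((x + 1) / x) := h

lemma Real.exp_div_add_one_le_add_one_div_pow {x : ℝ} (hx : 0 < x) (k : ℕ) :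
    exp (k / (x + 1)) ≤ ((x + 1) / x) ^ k := by
  rw [← exp_log (pow_pos (by positivity : 0 < (x + 1) / x) k), log_pow, div_eq_mul_inv]
  exact exp_le_exp.2 (mul_le_mul_of_nonneg_left (inv_add_one_le_log_add_one_div hx) k.cast_nonneg)

lemma Real.mul_mul_pow_le_add_one_pow {a b x : ℝ} {k : ℕ} (hx : 0 < x) (hxa : x + 1 ≤ a)
    (hb : 0 < b) (hk : a * (log a + log b) ≤ k) :
    b * a * x ^ k ≤ (x + 1) ^ k := by
  have ha : 0 < a := by linarith
  have hab : a * b ≤ ((x + 1) / x) ^ k :=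
    calc a * b = exp (log a + log b) := by rw [exp_add, exp_log ha, exp_log hb]
      _ ≤ exp (k / a) := exp_le_exp.2 ((le_div_iff₀ ha).2 (by linarith))
      _ ≤ exp (k / (x + 1)) :=
        exp_le_exp.2 (div_le_div_of_nonneg_left k.cast_nonneg (by linarith) hxa)
      _ ≤ ((x + 1) / x) ^ k := exp_div_add_one_le_add_one_div_pow hx k
  rw [div_pow, le_div_iff₀ (pow_pos hx k)] at hab
  linarith

lemma Nat.cast_choose_succ_mul {R : Type*} [CommRing R] {n t : ℕ} (htn : t ≤ n) :
    (n.choose (t + 1) : R) * (t + 1) = n.choose t * (n - t) := by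
  rw [← Nat.cast_sub htn]
  exact_mod_cast congrArg (Nat.cast : ℕ → R) (Nat.choose_succ_right_eq n t)

lemma Nat.cast_choose_mul_pow_le_choose_succ_mul_pow {n t k : ℕ} (htn : t < n) {c : ℝ}
    (hc : 0 ≤ c) (hgrowth : c * n * t ^ k ≤ (t + 1) ^ k) :
    (n.choose t : ℝ) * c * t ^ k ≤ n.choose (t + 1) * (t + 1) ^ k := by
  have hsucc : (t : ℝ) + 1 ≤ n := by exact_mod_cast htn
  have hgap : (1 : ℝ) ≤ n - t := by linarith
  have hC : (0 : ℝ) ≤ n.choose t * c * t ^ k := by positivity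
  refine le_of_mul_le_mul_right ?_ (by positivity : (0 : ℝ) < t + 1)
  calc (n.choose t : ℝ) * c * t ^ k * (t + 1)
      ≤ n.choose t * c * t ^ k * ((n - t) * n) := by
        gcongr
        nlinarith
    _ = n.choose t * (n - t) * (c * n * t ^ k) := by ring
    _ ≤ n.choose t * (n - t) * (t + 1) ^ k := by gcongr
    _ = n.choose (t + 1) * (t + 1) ^ k * (t + 1) := by
        rw [← Nat.cast_choose_succ_mul htn.le]; ring

/-- If `k ≥ 4h(log h + log q)` then `t ↦ C(h,t) q^{-t} (t/h)^k` is nondecreasing on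
`{1, …, h-1}`: for `1 ≤ t ≤ h-2`,
`C(h,t) q^{-t} (t/h)^k ≤ C(h,t+1) q^{-(t+1)} ((t+1)/h)^k`. -/
theorem binom_term_monotone (q h k t : ℕ) (hq : 2 ≤ q)
    (hk : (k : ℝ) ≥ 4 * h * (Real.log h + Real.log q))
    (ht1 : 1 ≤ t) (ht2 : t ≤ h - 2) :
    (h.choose t : ℝ) / (q : ℝ) ^ t * ((t : ℝ) / h) ^ k ≤
      (h.choose (t + 1) : ℝ) / (q : ℝ) ^ (t + 1) * (((t : ℝ) + 1) / h) ^ k := by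
  have hth : t < h := by omega
  have ht : (0 : ℝ) < t := by exact_mod_cast ht1
  have hq' : (0 : ℝ) < q := by exact_mod_cast (by omega : 0 < q)
  have hh : (0 : ℝ) < h := by exact_mod_cast (by omega : 0 < h)
  have hlog : 0 ≤ log h + log q :=
    add_nonneg (log_nonneg (by exact_mod_cast (by omega : 1 ≤ h)))
      (log_nonneg (by exact_mod_cast (by omega : 1 ≤ q)))
  have hgrowth : (q : ℝ) * h * t ^ k ≤ (t + 1) ^ k :=
    mul_mul_pow_le_add_one_pow ht (by exact_mod_cast hth) hq' (by nlinarith)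
  have key := Nat.cast_choose_mul_pow_le_choose_succ_mul_pow hth hq'.le hgrowth
  rw [div_pow, div_pow, div_mul_div_comm, div_mul_div_comm,
    div_le_div_iff₀ (by positivity) (by positivity), pow_succ]
  calc (h.choose t : ℝ) * t ^ k * (q ^ t * q * h ^ k)
      = (h.choose t * q * t ^ k) * (q ^ t * h ^ k) := by ring
    _ ≤ (h.choose (t + 1) * (t + 1) ^ k) * (q ^ t * h ^ k) := by gcongr
end

section
/- Let V be the (hq)×h matrix over ℤ/qℤ whose rows are all vectors of the form m·e_j^T for m ∈ {0,1,…,q-1} and j ∈ [h]. For b ∈ (ℤ/qℤ)^h define Preimage_V(b) as the set of k-tuples (ξ(1),…,ξ(k)) ∈ [hq]^k with Σ_ψ V_{ξ(ψ),:} = b. Then |Preimage_V(b)| depends only on the number of nonzero coordinates of b: if b₁ and b₂ both have exactly t nonzero coordinates then |Preimage_V(b₁)| = |Preimage_V(b₂)|. -/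
/-- The row of the word-decoding matrix `V` indexed by the pair `(j, m)`
(corresponding to index `mh + j` of `[hq]`): the vector `m · e_j ∈ (ℤ/qℤ)^h`. -/
noncomputable def Vrow (q h : ℕ) [NeZero q] (r : Fin h × ZMod q) : Fin h → ZMod q :=
  Pi.single r.1 r.2

/-- `|Preimage_V(b)|`: the number of `k`-tuples of row indices of `V` whose
corresponding rows sum to `b`. -/
noncomputable def preimageCard (q h k : ℕ) [NeZero q] (b : Fin h → ZMod q) : ℕ :=
  (Finset.univ.filter (fun ξ : Fin k → Fin h × ZMod q =>
    (∑ ψ, Vrow q h (ξ ψ)) = b)).card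

/-!
Write a tuple `ξ` as its index map `φ = Prod.fst ∘ ξ` together with its values; coordinate `j`
of `∑ ψ, Pi.single (ξ ψ).1 (ξ ψ).2` is the sum of the values over the fibre `φ⁻¹(j)`, and it
vanishes when that fibre is empty. Adding `c j` to the value at one chosen point of every
nonempty fibre keeps `φ` and adds `c` on `range φ`; with `c = b' - b` this is a bijection between
the preimages of `b` and `b'` as soon as `b` and `b'` have the same zero set. A permutation of the
coordinates matches the zero sets of any two vectors with equally many nonzero entries.
-/

open Finset Function Set

section SingleSum

variable {κ ι ι' G : Type*} [Fintype κ] [DecidableEq ι] [DecidableEq ι'] [AddCommMonoid G]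

def singleSum (ξ : κ → ι × G) : ι → G :=
  ∑ ψ, Pi.single (ξ ψ).1 (ξ ψ).2

lemma singleSum_apply (ξ : κ → ι × G) (j : ι) :
    singleSum ξ j = ∑ ψ with (ξ ψ).1 = j, (ξ ψ).2 := by
  simp [singleSum, Finset.sum_apply, Pi.single_apply, Finset.sum_filter, eq_comm]

lemma singleSum_apply_of_notMem_range {ξ : κ → ι × G} {j : ι}
    (hj : j ∉ range (Prod.fst ∘ ξ)) : singleSum ξ j = 0 := by
  rw [singleSum_apply]
  refine Finset.sum_eq_zero fun ψ hψ => absurd ⟨ψ, ?_⟩ hj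
  exact (Finset.mem_filter.mp hψ).2

lemma singleSum_map_fst (σ : ι ≃ ι') (ξ : κ → ι × G) :
    singleSum (Prod.map σ id ∘ ξ) = singleSum ξ ∘ σ.symm := by
  funext j
  simp only [singleSum_apply, comp_apply, Prod.map_fst, Prod.map_snd, id_eq,
    ← σ.eq_symm_apply]

lemma natCard_singleSum_eq_comp (σ : ι ≃ ι') (b : ι' → G) :
    Nat.card {ξ : κ → ι × G // singleSum ξ = b ∘ σ} =
      Nat.card {ξ : κ → ι' × G // singleSum ξ = b} :=
  Nat.card_congr <| (Equiv.arrowCongr (.refl κ) (σ.prodCongr (.refl G))).subtypeEquiv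
    fun ξ => by
      change _ ↔ singleSum (Prod.map σ id ∘ ξ) = b
      rw [singleSum_map_fst, Equiv.comp_symm_eq]

end SingleSum

section FiberShift

variable {κ ι G : Type*} [DecidableEq κ] [AddCommGroup G]

/-- It depends only on `φ ψ`, so each fibre of `φ` has exactly one point fixed by `fiberRep φ`. -/
noncomputable def fiberRep (φ : κ → ι) (ψ : κ) : κ :=
  rangeSplitting φ ⟨φ ψ, mem_range_self ψ⟩

noncomputable def fiberShift (c : ι → G) (ξ : κ → ι × G) : κ → ι × G := fun ψ =>
  ((ξ ψ).1, (ξ ψ).2 + if ψ = fiberRep (Prod.fst ∘ ξ) ψ then c (ξ ψ).1 else 0)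

lemma fiberShift_neg_fiberShift (c : ι → G) (ξ : κ → ι × G) :
    fiberShift (-c) (fiberShift c ξ) = ξ := by
  funext ψ
  refine Prod.ext rfl ?_
  change (ξ ψ).2 + (if ψ = fiberRep (Prod.fst ∘ ξ) ψ then c (ξ ψ).1 else 0) +
    (if ψ = fiberRep (Prod.fst ∘ ξ) ψ then -c (ξ ψ).1 else 0) = (ξ ψ).2
  split_ifs <;> simp

variable [Fintype κ] [DecidableEq ι]

lemma singleSum_fiberShift (c : ι → G) (ξ : κ → ι × G) :
    singleSum (fiberShift c ξ) = singleSum ξ + (range (Prod.fst ∘ ξ)).indicator c := by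
  funext j
  have hshift : ∑ ψ with (ξ ψ).1 = j,
      (if ψ = fiberRep (Prod.fst ∘ ξ) ψ then c (ξ ψ).1 else 0) =
      (range (Prod.fst ∘ ξ)).indicator c j := by
    by_cases hj : j ∈ range (Prod.fst ∘ ξ)
    · set r := rangeSplitting (Prod.fst ∘ ξ) ⟨j, hj⟩
      have hr : (ξ r).1 = j := apply_rangeSplitting (Prod.fst ∘ ξ) ⟨j, hj⟩
      calc _ = ∑ ψ with (ξ ψ).1 = j, if ψ = r then c j else 0 :=
            Finset.sum_congr rfl fun ψ hψ => by
              obtain rfl : (ξ ψ).1 = j := (Finset.mem_filter.mp hψ).2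
              rfl
        _ = _ := by rw [Finset.sum_ite_eq', if_pos (by simpa using hr), indicator_of_mem hj]
    · rw [indicator_of_notMem hj]
      refine Finset.sum_eq_zero fun ψ hψ => absurd ⟨ψ, ?_⟩ hj
      exact (Finset.mem_filter.mp hψ).2
  rw [Pi.add_apply, singleSum_apply, singleSum_apply, ← hshift, ← Finset.sum_add_distrib]
  rfl

lemma singleSum_fiberShift_sub {b b' : ι → G} (hbb' : ∀ j, b j = 0 ↔ b' j = 0)
    {ξ : κ → ι × G} (hξ : singleSum ξ = b) : singleSum (fiberShift (b' - b) ξ) = b' := by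
  rw [singleSum_fiberShift, hξ]
  funext j
  by_cases hj : j ∈ range (Prod.fst ∘ ξ)
  · simp [indicator_of_mem hj]
  · have hbj : b j = 0 := hξ ▸ singleSum_apply_of_notMem_range hj
    simp [indicator_of_notMem hj, hbj, ((hbb' j).mp hbj)]

lemma natCard_singleSum_congr_zero_iff {b b' : ι → G} (hbb' : ∀ j, b j = 0 ↔ b' j = 0) :
    Nat.card {ξ : κ → ι × G // singleSum ξ = b} = Nat.card {ξ : κ → ι × G // singleSum ξ = b'} :=
  Nat.card_congr
    { toFun := fun ξ => ⟨fiberShift (b' - b) ξ, singleSum_fiberShift_sub hbb' ξ.2⟩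
      invFun := fun ξ => ⟨fiberShift (b - b') ξ,
        singleSum_fiberShift_sub (fun j => (hbb' j).symm) ξ.2⟩
      left_inv := fun ξ => Subtype.ext <| by
        simpa only [neg_sub] using fiberShift_neg_fiberShift (b' - b) ξ.1
      right_inv := fun ξ => Subtype.ext <| by
        simpa only [neg_sub] using fiberShift_neg_fiberShift (b - b') ξ.1 }

end FiberShift

lemma Equiv.Perm.exists_apply_iff_of_card_filter_eq {ι : Type*} [Fintype ι] {p q : ι → Prop}
    [DecidablePred p] [DecidablePred q] (hpq : #{i | p i} = #{i | q i}) :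
    ∃ σ : Equiv.Perm ι, ∀ i, q (σ i) ↔ p i := by
  have e : {i // p i} ≃ {i // q i} :=
    Fintype.equivOfCardEq (by rwa [Fintype.card_subtype, Fintype.card_subtype])
  refine ⟨e.extendSubtype, fun i => ⟨fun hq => ?_, e.extendSubtype_mem i⟩⟩
  by_contra hp
  exact e.extendSubtype_not_mem i hp hq

lemma preimageCard_eq_natCard (q h k : ℕ) [NeZero q] (b : Fin h → ZMod q) :
    preimageCard q h k b = Nat.card {ξ : Fin k → Fin h × ZMod q // singleSum ξ = b} := by
  rw [Nat.card_eq_fintype_card, Fintype.card_subtype]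
  rfl

theorem preimage_card_depends_only_on_support_general (q h k t : ℕ) [NeZero q]
    (b₁ b₂ : Fin h → ZMod q)
    (hb₁ : (Finset.univ.filter (fun i => b₁ i ≠ 0)).card = t)
    (hb₂ : (Finset.univ.filter (fun i => b₂ i ≠ 0)).card = t) :
    preimageCard q h k b₁ = preimageCard q h k b₂ := by
  obtain ⟨σ, hσ⟩ := Equiv.Perm.exists_apply_iff_of_card_filter_eq (hb₂.trans hb₁.symm)
  rw [preimageCard_eq_natCard, preimageCard_eq_natCard, ← natCard_singleSum_eq_comp σ]
  exact natCard_singleSum_congr_zero_iff fun i => not_iff_not.mp (hσ i)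

/-- The size of `Preimage_V(b)` depends only on the number of nonzero coordinates
of `b`: if `b₁` and `b₂` both have exactly `t` nonzero coordinates, then
`|Preimage_V(b₁)| = |Preimage_V(b₂)|`. -/
theorem preimage_card_depends_only_on_support (q h k t : ℕ) [NeZero q]
    (hq : 2 ≤ q) (ht : t ≤ h) (b₁ b₂ : Fin h → ZMod q)
    (hb₁ : (Finset.univ.filter (fun i => b₁ i ≠ 0)).card = t)
    (hb₂ : (Finset.univ.filter (fun i => b₂ i ≠ 0)).card = t) :
    preimageCard q h k b₁ = preimageCard q h k b₂ :=
  preimage_card_depends_only_on_support_general q h k t b₁ b₂ hb₁ hb₂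
end

section
/- Let a₁,…,a_m ∈ (ℤ/qℤ)^n be fixed vectors such that any D of them are linearly independent over ℤ/qℤ (q prime). Consider y_i = ⟨a_i, s⟩ + e_i where s is uniform on (ℤ/qℤ)^n and e₁,…,e_m are arbitrary random variables independent of s. Then for every v ∈ (ℤ/qℤ)^m with 1 ≤ |support(v)| ≤ D, E[exp(2πi·⟨y,v⟩/q)] = 0. -/
/-! For fixed noise `ε` the phase is `⟨vᵀa, s⟩ + ⟨ε, v⟩`, so averaging over `s` gives a character
sum of `s ↦ ψ ⟨vᵀa, s⟩` for the standard (primitive) character `ψ` of `ℤ/qℤ`. It vanishes because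
`vᵀa = ∑ vᵢ aᵢ ≠ 0`, the `aᵢ` with `vᵢ ≠ 0` being linearly independent. -/

open Finset Matrix

theorem LinearIndepOn.sum_smul_ne_zero {ι R M : Type*} [Fintype ι] [Ring R]
    [AddCommGroup M] [Module R M] {a : ι → M} {v : ι → R}
    (ha : LinearIndepOn R a (Function.support v)) (hv : v ≠ 0) :
    ∑ i, v i • a i ≠ 0 := by
  classical
  obtain ⟨i, hi⟩ := Function.ne_iff.mp hv
  have hS : LinearIndepOn R a ↑(univ.filter fun i => v i ≠ 0) := by
    simpa [Function.support] using ha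
  intro h0
  refine hi (linearIndepOn_finset_iff.mp hS v ?_ i (mem_filter.mpr ⟨mem_univ i, hi⟩))
  rwa [sum_filter_of_ne fun i _ hvi => left_ne_zero_of_smul hvi]

theorem AddChar.IsPrimitive.sum_apply_dotProduct_eq_zero {ι R R' : Type*} [Fintype ι]
    [DecidableEq ι] [CommRing R] [Fintype R] [CommRing R'] [IsDomain R'] {ψ : AddChar R R'}
    (hψ : ψ.IsPrimitive)
    {c : ι → R} (hc : c ≠ 0) : ∑ s, ψ (c ⬝ᵥ s) = 0 := by
  obtain ⟨j, hj⟩ := Function.ne_iff.mp hc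
  obtain ⟨x, hx⟩ := AddChar.ne_one_iff.mp (hψ hj)
  let χ := ψ.compAddMonoidHom (AddMonoidHom.mk' (c ⬝ᵥ ·) (dotProduct_add c))
  refine AddChar.sum_eq_zero_of_ne_one (ψ := χ) (AddChar.ne_one_iff.mpr ⟨Pi.single j x, ?_⟩)
  simpa [χ] using hx

theorem lwe_fourier_coefficient_zero_general (q n m D : ℕ) [Fact q.Prime]
    (a : Fin m → Fin n → ZMod q)
    (hindep : ∀ S : Finset (Fin m), S.card ≤ D →
      LinearIndependent (ZMod q) (fun i : S => a i))
    (wt : (Fin m → ZMod q) → ℝ)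
    (v : Fin m → ZMod q)
    (hv1 : 1 ≤ (Finset.univ.filter (fun i => v i ≠ 0)).card)
    (hvD : (Finset.univ.filter (fun i => v i ≠ 0)).card ≤ D) :
    (∑ ε : Fin m → ZMod q, (wt ε : ℂ) * (((q : ℂ) ^ n)⁻¹ *
      ∑ s : Fin n → ZMod q,
        Complex.exp (2 * Real.pi * Complex.I *
          ((∑ i, ((∑ j, a i j * s j) + ε i) * v i).val : ℂ) / q))) = 0 := by
  have hv : v ≠ 0 := by
    obtain ⟨i, hi⟩ := card_pos.mp hv1
    exact Function.ne_iff.mpr ⟨i, (mem_filter.mp hi).2⟩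
  have hsupp : LinearIndepOn (ZMod q) a (Function.support v) := by
    have h : LinearIndepOn (ZMod q) a ↑(univ.filter fun i => v i ≠ 0) := hindep _ hvD
    rwa [coe_filter_univ] at h
  have hc : v ᵥ* of a ≠ 0 := by
    rw [vecMul_eq_sum]
    exact hsupp.sum_smul_ne_zero hv
  have hphase (ε : Fin m → ZMod q) (s : Fin n → ZMod q) :
      ∑ i, ((∑ j, a i j * s j) + ε i) * v i = (v ᵥ* of a) ⬝ᵥ s + ε ⬝ᵥ v := by
    change (of a *ᵥ s + ε) ⬝ᵥ v = _
    rw [add_dotProduct, dotProduct_comm, dotProduct_mulVec]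
  refine sum_eq_zero fun ε _ => ?_
  simp_rw [hphase, ← ZMod.toCircle_apply, ← ZMod.stdAddChar_apply, AddChar.map_add_eq_mul,
    ← sum_mul, (ZMod.isPrimitive_stdAddChar q).sum_apply_dotProduct_eq_zero hc, zero_mul, mul_zero]

/-- Let `a₁,…,a_m ∈ (ℤ/qℤ)^n` (q prime) be such that any `D` of them are linearly
independent, and let `y_i = ⟨a_i, s⟩ + e_i` with `s` uniform on `(ℤ/qℤ)^n` and
`e = (e₁,…,e_m)` drawn (independently of `s`) from an arbitrary distribution with
weights `wt`.  Then for every `v ∈ (ℤ/qℤ)^m` with `1 ≤ |support(v)| ≤ D`,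
`E[exp(2πi·⟨y,v⟩/q)] = 0`. -/
theorem lwe_fourier_coefficient_zero (q n m D : ℕ) [Fact q.Prime]
    (a : Fin m → Fin n → ZMod q)
    (hindep : ∀ S : Finset (Fin m), S.card ≤ D →
      LinearIndependent (ZMod q) (fun i : S => a i))
    (wt : (Fin m → ZMod q) → ℝ) (hwt : ∀ ε, 0 ≤ wt ε) (hwt1 : ∑ ε, wt ε = 1)
    (v : Fin m → ZMod q)
    (hv1 : 1 ≤ (Finset.univ.filter (fun i => v i ≠ 0)).card)
    (hvD : (Finset.univ.filter (fun i => v i ≠ 0)).card ≤ D) :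
    (∑ ε : Fin m → ZMod q, (wt ε : ℂ) * (((q : ℂ) ^ n)⁻¹ *
      ∑ s : Fin n → ZMod q,
        Complex.exp (2 * Real.pi * Complex.I *
          ((∑ i, ((∑ j, a i j * s j) + ε i) * v i).val : ℂ) / q))) = 0 :=
  lwe_fourier_coefficient_zero_general q n m D a hindep wt v hv1 hvD
end
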